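/- arXiv:1907.03637 — 5 statements merged into one kernel-verified Lean document; each statement's English description precedes it below -/
import Mathlib

section
/- Let (R, m) be a Noetherian local ring, let f_1, …, f_r ∈ R, let J ⊆ R be an ideal, and let k = ar_J((f_1, …, f_r)) be the Artin–Rees number of (f_1, …, f_r) with respect to J. Then for every ε_1, …, ε_r ∈ J^{k+1} and every n ≥ k+1, J^{n+1} + ((f_1, …, f_r) ∩ J^n) ⊆ J^{n+1} + ((f_1+ε_1, …, f_r+ε_r) ∩ J^n). -/
open IsLocalRing

/-- An element `f` of a Noetherian local ring `R` is filter-regular if `f ∉ P` for every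
associated prime `P` of `R` other than the maximal ideal. -/
def IsFilterRegularElem {R : Type*} [CommRing R] [IsLocalRing R] (f : R) : Prop :=
  ∀ P ∈ associatedPrimes R R, P ≠ maximalIdeal R → f ∉ P

/-- The image of `f` in `R ⧸ I` is a filter-regular element: `f` avoids all associated primes of
the `R`-module `R ⧸ I` except the maximal ideal. -/
def IsFilterRegularOn {R : Type*} [CommRing R] [IsLocalRing R] (I : Ideal R) (f : R) : Prop :=
  ∀ P ∈ associatedPrimes R (R ⧸ I), P ≠ maximalIdeal R → f ∉ P

/-- `f 0, f 1, …` is a filter-regular sequence: each `f i` is filter-regular modulo the ideal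
generated by the preceding elements. -/
def IsFilterRegularSeq {R : Type*} [CommRing R] [IsLocalRing R] {r : ℕ} (f : Fin r → R) : Prop :=
  ∀ i : Fin r, IsFilterRegularOn (Ideal.span (f '' {j | j < i})) (f i)

/-- The length of an `R`-module `M`, i.e. the supremum of lengths of strictly increasing chains
of submodules of `M`. -/
noncomputable def moduleLength (R M : Type*) [Ring R] [AddCommGroup M] [Module R M] :
    WithBot ℕ∞ :=
  Order.krullDim (Submodule R M)

/-- The Artin–Rees number of `I` with respect to `J`: the least `s` with
`J ^ n ⊓ I = J ^ (n - s) * (J ^ s ⊓ I)` for all `n ≥ s`. -/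
noncomputable def arNumber {R : Type*} [CommRing R] (J I : Ideal R) : ℕ :=
  sInf {s : ℕ | ∀ n ≥ s, J ^ n ⊓ I = J ^ (n - s) * (J ^ s ⊓ I)}

open RingTheory.Sequence in
/-- The depth of a Noetherian local ring: the supremum of lengths of regular sequences contained
in the maximal ideal. -/
noncomputable def ringDepth (S : Type*) [CommRing S] [IsLocalRing S] : ℕ∞ :=
  sSup {n : ℕ∞ | ∃ l : List S,
    (∀ x ∈ l, x ∈ maximalIdeal S) ∧ IsRegular S l ∧ (l.length : ℕ∞) = n}

/-- A local ring is Cohen–Macaulay if its depth equals its Krull dimension. -/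
def IsCMLocal (S : Type*) [CommRing S] [IsLocalRing S] : Prop :=
  (ringDepth S : WithBot ℕ∞) = ringKrullDim S

/-- A (not necessarily local) ring is Cohen–Macaulay if it is Noetherian and all of its
localizations at primes are Cohen–Macaulay local rings. -/
def IsCMRing (S : Type*) [CommRing S] : Prop :=
  IsNoetherianRing S ∧ ∀ (P : Ideal S) (hP : P.IsPrime),
    letI := hP
    IsCMLocal (Localization.AtPrime P)

/-- `aIdealAt S n = ∏_{i = 0}^{dim S - 1} Ann H_n^i(S)`, the product of the annihilators of the
local cohomology modules of `S` supported at `n`, in degrees strictly below `dim S`. -/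
noncomputable def aIdealAt (S : Type u) [CommRing S] (n : Ideal S) : Ideal S :=
  ∏ i ∈ Finset.range (ENat.toNat (WithBot.unbotD 0 (ringKrullDim S))),
    Module.annihilator S ((localCohomology n i).obj (ModuleCat.of S S))

/-- The non Cohen–Macaulay locus: primes `P` such that `S_P` is not Cohen–Macaulay. -/
def NCM (S : Type*) [CommRing S] : Set (Ideal S) :=
  {P | ∃ hP : P.IsPrime, ¬ (letI := hP; IsCMLocal (Localization.AtPrime P))}

/-- The dimension of the non Cohen–Macaulay locus: `sup {dim S/P : P ∈ NCM S}`. -/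
noncomputable def dimNCM (S : Type*) [CommRing S] : WithBot ℕ∞ :=
  ⨆ P ∈ NCM S, ringKrullDim (S ⧸ P)

/-! Perturbing the generators of `I = (f_1, …, f_r)` by `ε_i ∈ J^{k+1}` changes `J^{n-k} I` only
modulo `J^{n+1}`. By the Artin–Rees property at `k = ar_J(I)`, `I ∩ J^n ⊆ J^{n-k} I`, so
`I ∩ J^n ⊆ J^{n+1} + (f_i + ε_i)`, and intersecting with `J^n ⊇ J^{n+1}` (modular law) gives the
containment. -/

open Ideal Set

theorem arNumber_spec {R : Type*} [CommRing R] [IsNoetherianRing R] (J I : Ideal R) {n : ℕ}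
    (hn : arNumber J I ≤ n) : J ^ n ⊓ I = J ^ (n - arNumber J I) * (J ^ arNumber J I ⊓ I) := by
  refine Nat.sInf_mem (s := {s | ∀ n ≥ s, J ^ n ⊓ I = J ^ (n - s) * (J ^ s ⊓ I)}) ?_ n hn
  obtain ⟨k, hk⟩ := exists_pow_inf_eq_pow_smul J (M := R) I
  exact ⟨k, fun n hn => by simpa only [smul_eq_mul, mul_top] using hk n hn⟩

theorem inf_pow_le_pow_sub_arNumber_mul {R : Type*} [CommRing R] [IsNoetherianRing R]
    (J I : Ideal R) {n : ℕ} (hn : arNumber J I ≤ n) : I ⊓ J ^ n ≤ J ^ (n - arNumber J I) * I := by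
  rw [inf_comm, arNumber_spec J I hn]
  exact mul_mono_right inf_le_right

theorem Ideal.span_range_le_span_range_add_sup {R ι : Type*} [Ring R] (f ε : ι → R) :
    span (range f) ≤ span (range fun i => f i + ε i) ⊔ span (range ε) := by
  refine span_le.mpr (range_subset_iff.mpr fun i => ?_)
  rw [← add_sub_cancel_right (f i) (ε i)]
  exact sub_mem (mem_sup_left (subset_span ⟨i, rfl⟩)) (mem_sup_right (subset_span ⟨i, rfl⟩))

theorem Ideal.mul_span_range_le_of_mem {R ι : Type*} [Ring R] (f ε : ι → R) (K L : Ideal R)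
    (hε : ∀ i, ε i ∈ L) :
    K * span (range f) ≤ span (range fun i => f i + ε i) ⊔ K * L := calc
  K * span (range f) ≤ K * (span (range fun i => f i + ε i) ⊔ span (range ε)) :=
    mul_mono_right (span_range_le_span_range_add_sup f ε)
  _ = K * span (range fun i => f i + ε i) ⊔ K * span (range ε) := mul_sup _ _ _
  _ ≤ span (range fun i => f i + ε i) ⊔ K * L :=
    sup_le_sup mul_le_right (mul_mono_right (span_le.mpr (range_subset_iff.mpr hε)))

theorem perturbed_ideal_containment_general
    {R : Type*} [CommRing R] [IsNoetherianRing R]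
    {r : ℕ} (f : Fin r → R) (J : Ideal R) (ε : Fin r → R)
    (hε : ∀ i, ε i ∈ J ^ (arNumber J (Ideal.span (Set.range f)) + 1)) :
    ∀ n : ℕ, arNumber J (Ideal.span (Set.range f)) + 1 ≤ n →
      J ^ (n + 1) + (Ideal.span (Set.range f) ⊓ J ^ n) ≤
        J ^ (n + 1) + (Ideal.span (Set.range fun i => f i + ε i) ⊓ J ^ n) := by
  intro n hn
  set k := arNumber J (span (range f))
  have hI : span (range f) ⊓ J ^ n ≤ J ^ (n + 1) ⊔ span (range fun i => f i + ε i) := calc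
    span (range f) ⊓ J ^ n ≤ J ^ (n - k) * span (range f) :=
      inf_pow_le_pow_sub_arNumber_mul J _ (by omega)
    _ ≤ span (range fun i => f i + ε i) ⊔ J ^ (n - k) * J ^ (k + 1) :=
      mul_span_range_le_of_mem f ε _ _ hε
    _ = J ^ (n + 1) ⊔ span (range fun i => f i + ε i) := by
      rw [← pow_add, show n - k + (k + 1) = n + 1 by omega, sup_comm]
  refine sup_le le_sup_left ?_
  rw [Submodule.add_eq_sup, ← sup_inf_assoc_of_le _ (pow_le_pow_right n.le_succ)]
  exact le_inf hI inf_le_right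

/-- With `k = ar_J((f_1, …, f_r))`, for `ε_i ∈ J^{k+1}` and `n ≥ k+1`,
`J^{n+1} + ((f_1, …, f_r) ∩ J^n) ⊆ J^{n+1} + ((f_1+ε_1, …, f_r+ε_r) ∩ J^n)`. -/
theorem perturbed_ideal_containment
    {R : Type*} [CommRing R] [IsNoetherianRing R] [IsLocalRing R]
    {r : ℕ} (f : Fin r → R) (J : Ideal R) (ε : Fin r → R)
    (hε : ∀ i, ε i ∈ J ^ (arNumber J (Ideal.span (Set.range f)) + 1)) :
    ∀ n : ℕ, arNumber J (Ideal.span (Set.range f)) + 1 ≤ n →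
      J ^ (n + 1) + (Ideal.span (Set.range f) ⊓ J ^ n) ≤
        J ^ (n + 1) + (Ideal.span (Set.range fun i => f i + ε i) ⊓ J ^ n) :=
  perturbed_ideal_containment_general f J ε hε
end

section
/- Let R be a Noetherian ring, let f ∈ R, let J ⊆ R be an ideal, and let k = ar_J((f)) be the Artin–Rees number of the principal ideal (f) with respect to J. If ε ∈ J^k satisfies ε·(0 : f) = 0, then for every n ≥ k, (J^n : f) ⊆ (J^n : (f + ε)). -/
open IsLocalRing

/-! By Artin–Rees, `x f ∈ J^n` gives `x f ∈ J^(n-k) (f)`, so `x = z + a` with `z ∈ J^(n-k)` and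
`a ∈ (0 : f)`. Then `ε x = ε z ∈ J^(n-k) J^k = J^n`, hence `(f + ε) x ∈ J^n`. -/

namespace Ideal

variable {R : Type*} [CommRing R]

theorem arNumber_spec [IsNoetherianRing R] (J I : Ideal R) :
    ∀ n ≥ arNumber J I, J ^ n ⊓ I = J ^ (n - arNumber J I) * (J ^ arNumber J I ⊓ I) := by
  refine Nat.sInf_mem (s := {s | ∀ n ≥ s, J ^ n ⊓ I = J ^ (n - s) * (J ^ s ⊓ I)}) ?_
  obtain ⟨k, hk⟩ := exists_pow_inf_eq_pow_smul J (I : Submodule R R)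
  exact ⟨k, fun n hn => by simpa [smul_eq_mul, mul_top] using hk n hn⟩

theorem pow_inf_le_pow_sub_arNumber_mul [IsNoetherianRing R] (J I : Ideal R) {n : ℕ}
    (hn : arNumber J I ≤ n) : J ^ n ⊓ I ≤ J ^ (n - arNumber J I) * I := by
  rw [arNumber_spec J I n hn]
  exact mul_mono_right inf_le_right

theorem colon_span_singleton_le_pow_sup_colon_bot [IsNoetherianRing R] (J : Ideal R) (f : R)
    {n : ℕ} (hn : arNumber J (span {f}) ≤ n) :
    (J ^ n).colon (span {f}) ≤
      J ^ (n - arNumber J (span {f})) ⊔ (⊥ : Ideal R).colon (span {f}) := by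
  intro x hx
  rw [mem_colon_span_singleton] at hx
  have hxf : x * f ∈ J ^ n ⊓ span {f} := ⟨hx, mem_span_singleton'.mpr ⟨x, rfl⟩⟩
  obtain ⟨z, hz, hzf⟩ := mem_mul_span_singleton.mp (pow_inf_le_pow_sub_arNumber_mul J _ hn hxf)
  refine Submodule.mem_sup.mpr ⟨z, hz, x - z, ?_, add_sub_cancel z x⟩
  rw [mem_colon_span_singleton, sub_mul, hzf, sub_self]
  exact zero_mem _

theorem colon_span_singleton_le_colon_span_singleton_add {I L : Ideal R} {f ε : R}
    (hcolon : I.colon (span {f}) ≤ L ⊔ (⊥ : Ideal R).colon (span {f}))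
    (hL : ∀ z ∈ L, ε * z ∈ I) (hann : ∀ a ∈ (⊥ : Ideal R).colon (span {f}), ε * a = 0) :
    I.colon (span {f}) ≤ I.colon (span {f + ε}) := by
  intro x hx
  obtain ⟨z, hz, a, ha, rfl⟩ := Submodule.mem_sup.mp (hcolon hx)
  rw [mem_colon_span_singleton] at hx ⊢
  have hεx : ε * (z + a) ∈ I := by
    rw [mul_add, hann a ha, add_zero]
    exact hL z hz
  rw [mul_add, mul_comm _ ε]
  exact add_mem hx hεx

end Ideal

/-- With `k = ar_J((f))`, if `ε ∈ J^k` kills `(0 : f)`, then `(J^n : f) ⊆ (J^n : f + ε)`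
for all `n ≥ k`. -/
theorem colon_le_colon_perturbed
    {R : Type*} [CommRing R] [IsNoetherianRing R] (f ε : R) (J : Ideal R)
    (hε : ε ∈ J ^ arNumber J (Ideal.span {f}))
    (hann : ∀ x ∈ Submodule.colon (⊥ : Ideal R) (Ideal.span {f}), ε * x = 0) :
    ∀ n : ℕ, arNumber J (Ideal.span {f}) ≤ n →
      Submodule.colon (J ^ n) (Ideal.span {f}) ≤
        Submodule.colon (J ^ n) (Ideal.span {f + ε}) := by
  intro n hn
  refine Ideal.colon_span_singleton_le_colon_span_singleton_add
    (Ideal.colon_span_singleton_le_pow_sup_colon_bot J f hn) (fun z hz => ?_) hann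
  rw [mul_comm, ← Nat.sub_add_cancel hn, pow_add]
  exact Ideal.mul_mem_mul hz hε
end

section
/- Let (R, m) be a Noetherian local ring and let f_1, …, f_r be a filter-regular sequence. Then the image of f_1 in R/(f_2, …, f_r) is a filter-regular element of R/(f_2, …, f_r). -/
open IsLocalRing

/-!
Over a Noetherian ring, `g` avoids every associated prime of `R ⧸ I` not containing `J` iff some
power of `J` kills `(I : g) / I`, the kernel of multiplication by `g` on `R ⧸ I`: the associated
primes of that kernel are associated primes of `R ⧸ I` containing `g`, and a finite module all
of whose associated primes contain `J` is killed by a power of `J`, since its minimal primes are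
among them. In this form, with `J = m`, filter-regularity can be swapped: if `a` is filter-regular
modulo `I` and `b` modulo `(a) + I`, then `a` is filter-regular modulo `(b) + I`. Moving `f_1`
past `f_2, …, f_r` one element at a time gives the theorem.
-/

section AssociatedPrimes

variable {R M : Type*} [CommRing R] [IsNoetherianRing R] [AddCommGroup M] [Module R M]
  [Module.Finite R M] {J : Ideal R}

theorem exists_pow_le_annihilator_of_forall_le_associatedPrimes
    (hJ : ∀ P ∈ associatedPrimes R M, J ≤ P) : ∃ s, J ^ s ≤ Module.annihilator R M := by
  refine Ideal.exists_pow_le_of_le_radical_of_fg ?_ (IsNoetherian.noetherian J)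
  rw [← Ideal.sInf_minimalPrimes]
  exact le_sInf fun P hP =>
    hJ P (Module.associatedPrimes.minimalPrimes_annihilator_subset_associatedPrimes R M hP)

theorem notMem_associatedPrimes_iff_exists_pow_le_annihilator_ker {g : R} :
    (∀ P ∈ associatedPrimes R M, ¬ J ≤ P → g ∉ P) ↔
      ∃ s, J ^ s ≤ Module.annihilator R (LinearMap.ker (LinearMap.lsmul R M g)) := by
  constructor
  · intro h
    apply exists_pow_le_annihilator_of_forall_le_associatedPrimes
    intro P hP
    obtain ⟨-, ⟨x, hx⟩, rfl⟩ := isAssociatedPrime_iff.mp hP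
    by_contra hJP
    refine h _ (associatedPrimes.subset_of_injective (Submodule.injective_subtype _) hP) hJP ?_
    rw [Submodule.mem_colon_singleton, Submodule.mem_bot, ← Subtype.coe_inj]
    simpa using hx
  · rintro ⟨s, hs⟩ P hP hJP hgP
    obtain ⟨hPrime, x, rfl⟩ := isAssociatedPrime_iff.mp hP
    have hx : x ∈ LinearMap.ker (LinearMap.lsmul R M g) := by simpa using hgP
    refine hJP (hPrime.le_of_pow_le (n := s) fun t ht => ?_)
    simpa using congr_arg Subtype.val (Module.mem_annihilator.mp (hs ht) ⟨x, hx⟩)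

end AssociatedPrimes

theorem annihilator_ker_lsmul_quotient {R : Type*} [CommRing R] (I : Ideal R) (g : R) :
    Module.annihilator R (LinearMap.ker (LinearMap.lsmul R (R ⧸ I) g)) =
      I.colon ↑(I.colon {g}) := by
  ext t
  simp only [Module.mem_annihilator, Submodule.mem_colon, Subtype.forall, LinearMap.mem_ker,
    LinearMap.lsmul_apply, Subtype.ext_iff, Submodule.coe_smul, Submodule.coe_zero]
  rw [Ideal.Quotient.mk_surjective.forall]
  simp [Algebra.smul_def, ← map_mul, Ideal.Quotient.eq_zero_iff_mem, mul_comm t, mul_comm g]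

theorem pow_add_le_colon_span_singleton_sup_swap {R : Type*} [CommRing R] {I J : Ideal R}
    {a b : R} {s t : ℕ} (ha : J ^ s ≤ I.colon ↑(I.colon {a}))
    (hb : J ^ t ≤ (Ideal.span {a} ⊔ I).colon ↑((Ideal.span {a} ⊔ I).colon {b})) :
    J ^ (t + s) ≤ (Ideal.span {b} ⊔ I).colon ↑((Ideal.span {b} ⊔ I).colon {a}) := by
  rw [pow_add, Ideal.mul_le]
  intro τ hτ σ hσ
  refine Submodule.mem_colon.mpr fun x hx => ?_
  obtain ⟨c, i, hi, hxa⟩ := Ideal.mem_span_singleton_sup.mp (Submodule.mem_colon_singleton.mp hx)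
  rw [smul_eq_mul] at hxa
  have hc : c ∈ (Ideal.span {a} ⊔ I).colon {b} :=
    Submodule.mem_colon_singleton.mpr (Ideal.mem_span_singleton_sup.mpr
      ⟨x, -i, I.neg_mem hi, by rw [smul_eq_mul]; linear_combination -hxa⟩)
  obtain ⟨d, i', hi', hτc⟩ :=
    Ideal.mem_span_singleton_sup.mp (Submodule.mem_colon.mp (hb hτ) c hc)
  have hy : τ * x - d * b ∈ I.colon {a} := by
    rw [Submodule.mem_colon_singleton, smul_eq_mul,
      show (τ * x - d * b) * a = τ * i + b * i' by linear_combination -τ * hxa - b * hτc]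
    exact I.add_mem (I.mul_mem_left τ hi) (I.mul_mem_left b hi')
  refine Ideal.mem_span_singleton_sup.mpr
    ⟨σ * d, σ * (τ * x - d * b), ?_, by rw [smul_eq_mul]; ring⟩
  simpa using Submodule.mem_colon.mp (ha hσ) _ hy

theorem Fin.image_setOf_lt_succ {α : Type*} {n : ℕ} (g : Fin (n + 1) → α) (i : Fin n) :
    g '' {j | j < i.succ} = insert (g 0) (Fin.tail g '' {j | j < i}) := by
  ext x
  simp [Fin.exists_fin_succ, Fin.succ_lt_succ_iff, eq_comm, Fin.tail]

section FilterRegular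

variable {R : Type*} [CommRing R] [IsNoetherianRing R] [IsLocalRing R]

theorem isFilterRegularOn_iff_exists_pow_le_colon {I : Ideal R} {g : R} :
    IsFilterRegularOn I g ↔ ∃ s, maximalIdeal R ^ s ≤ I.colon ↑(I.colon {g}) := by
  simp only [← annihilator_ker_lsmul_quotient,
    ← notMem_associatedPrimes_iff_exists_pow_le_annihilator_ker]
  refine forall₂_congr fun P hP => ?_
  rw [(le_maximalIdeal (isAssociatedPrime_iff.mp hP).1.ne_top).ge_iff_eq, ne_eq]

theorem IsFilterRegularOn.swap {I : Ideal R} {a b : R} (ha : IsFilterRegularOn I a)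
    (hb : IsFilterRegularOn (Ideal.span {a} ⊔ I) b) :
    IsFilterRegularOn (Ideal.span {b} ⊔ I) a := by
  rw [isFilterRegularOn_iff_exists_pow_le_colon] at *
  obtain ⟨s, hs⟩ := ha
  obtain ⟨t, ht⟩ := hb
  exact ⟨t + s, pow_add_le_colon_span_singleton_sup_swap hs ht⟩

theorem IsFilterRegularOn.span_range_sup {r : ℕ} (g : Fin r → R) {I : Ideal R} {a : R}
    (ha : IsFilterRegularOn I a)
    (hg : ∀ i, IsFilterRegularOn (Ideal.span (insert a (g '' {j | j < i})) ⊔ I) (g i)) :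
    IsFilterRegularOn (Ideal.span (Set.range g) ⊔ I) a := by
  induction r generalizing I with
  | zero => simpa [Set.range_eq_empty] using ha
  | succ r ih =>
    have hg0 : IsFilterRegularOn (Ideal.span {a} ⊔ I) (g 0) := by simpa using hg 0
    have hg' := ih (Fin.tail g) (ha.swap hg0) fun i => by
      have := hg i.succ
      rwa [Fin.image_setOf_lt_succ, Set.insert_comm, Ideal.span_insert, sup_assoc,
        sup_left_comm] at this
    rwa [Fin.range_fin_succ, Ideal.span_insert, sup_assoc, sup_left_comm]

end FilterRegular

/-- If `f_1, …, f_r` is a filter-regular sequence, then the image of `f_1` in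
`R/(f_2, …, f_r)` is a filter-regular element. -/
theorem head_filter_regular_mod_tail
    {R : Type*} [CommRing R] [IsNoetherianRing R] [IsLocalRing R]
    {r : ℕ} (f : Fin (r + 1) → R) (hf : IsFilterRegularSeq f) :
    IsFilterRegularOn (Ideal.span (f '' {j | j ≠ 0})) (f 0) := by
  have h0 : IsFilterRegularOn ⊥ (f 0) := by simpa using hf 0
  have htail := IsFilterRegularOn.span_range_sup (Fin.tail f) h0 fun i => by
    rw [sup_bot_eq, ← Fin.image_setOf_lt_succ]
    exact hf i.succ
  have himage : f '' {j | j ≠ 0} = Set.range (Fin.tail f) := by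
    rw [← Set.compl_singleton_eq, ← Fin.range_succ, ← Set.range_comp]
    rfl
  simpa [himage] using htail
end

section
/- Let (R, m) be a Noetherian local ring and suppose f_1, …, f_r ∈ R is an improper regular sequence, i.e., for each 0 ≤ i < r, f_{i+1} is a nonzerodivisor on R/(f_1, …, f_i). Then f_1 is a nonzerodivisor on R/(f_2, …, f_r). -/
open IsLocalRing

/- If every `f i` lies in the maximal ideal, the hypothesis says that `f` is a weakly regular
sequence, and in a Noetherian local ring such sequences stay weakly regular under permutation;
moving `f 0` to the end shows it is regular modulo the others. Otherwise some `f j` is a unit: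
either `f 0` itself, or the tail generates the unit ideal and the quotient is zero. -/

theorem Ideal.ofList_take_ofFn {R : Type*} [CommSemiring R] {n : ℕ} (f : Fin n → R) (i : Fin n) :
    Ideal.ofList ((List.ofFn f).take i) = Ideal.span (f '' {j | j < i}) := by
  rw [← Fin.ofFn_take_eq_take_ofFn i.isLt.le f]
  refine congrArg Ideal.span (Set.ext fun x => ?_)
  simp only [Set.mem_ofPred_eq, List.mem_ofFn, Fin.take, Set.mem_image]
  constructor
  · rintro ⟨j, rfl⟩
    exact ⟨Fin.castLE i.isLt.le j, j.isLt, rfl⟩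
  · rintro ⟨j, hj, rfl⟩
    exact ⟨⟨j, hj⟩, rfl⟩

theorem Ideal.ofList_ofFn_succ {R : Type*} [CommSemiring R] {n : ℕ} (f : Fin (n + 1) → R) :
    Ideal.ofList (List.ofFn fun i => f i.succ) = Ideal.span (f '' {j | j ≠ 0}) := by
  rw [← Set.compl_singleton_eq, ← Fin.range_succ, ← Set.range_comp]
  refine congrArg Ideal.span (Set.ext fun x => ?_)
  simp

section

open RingTheory.Sequence

variable {R M : Type*} [CommRing R] [AddCommGroup M] [Module R M]

theorem RingTheory.Sequence.isWeaklyRegular_ofFn_iff {n : ℕ} (f : Fin n → R) :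
    IsWeaklyRegular M (List.ofFn f) ↔
      ∀ i, IsSMulRegular (M ⧸ (Ideal.span (f '' {j | j < i}) • ⊤ : Submodule R M)) (f i) := by
  rw [isWeaklyRegular_iff, Fin.forall_iff]
  refine forall_congr' fun i => ?_
  simp only [List.length_ofFn, List.getElem_ofFn]
  refine forall_congr' fun hi => ?_
  rw [← Ideal.ofList_take_ofFn f ⟨i, hi⟩]

theorem RingTheory.Sequence.isWeaklyRegular_self_ofFn_iff {n : ℕ} (f : Fin n → R) :
    IsWeaklyRegular R (List.ofFn f) ↔
      ∀ i, IsSMulRegular (R ⧸ Ideal.span (f '' {j | j < i})) (f i) := by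
  rw [isWeaklyRegular_ofFn_iff]
  refine forall_congr' fun i => ?_
  rw [smul_eq_mul, Ideal.mul_top]

theorem IsLocalRing.isSMulRegular_quotient_of_isWeaklyRegular_cons [IsLocalRing R]
    [IsNoetherian R M] {r : R} {rs : List R} (h : IsWeaklyRegular M (r :: rs))
    (hmax : ∀ x ∈ r :: rs, x ∈ maximalIdeal R) :
    IsSMulRegular (M ⧸ (Ideal.ofList rs • ⊤ : Submodule R M)) r := by
  have h' := isWeaklyRegular_of_perm_of_subset_maximalIdeal h
    (List.perm_append_singleton r rs).symm hmax
  rw [isWeaklyRegular_append_iff, isWeaklyRegular_singleton_iff] at h'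
  exact h'.2

end

open RingTheory.Sequence in
/-- If `f_1, …, f_r` is an improper regular sequence on a Noetherian local ring, then `f_1` is a
nonzerodivisor on `R/(f_2, …, f_r)`. -/
theorem head_regular_mod_tail_of_improper_regular
    {R : Type*} [CommRing R] [IsNoetherianRing R] [IsLocalRing R]
    {r : ℕ} (f : Fin (r + 1) → R)
    (hf : ∀ i, IsSMulRegular (R ⧸ Ideal.span (f '' {j | j < i})) (f i)) :
    IsSMulRegular (R ⧸ Ideal.span (f '' {j | j ≠ 0})) (f 0) := by
  by_cases hmax : ∀ i, f i ∈ maximalIdeal R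
  · have hreg := (isWeaklyRegular_self_ofFn_iff f).2 hf
    rw [List.ofFn_succ] at hreg
    have hhead := isSMulRegular_quotient_of_isWeaklyRegular_cons hreg
      (by simpa [List.mem_ofFn, Fin.forall_fin_succ] using hmax)
    rwa [smul_eq_mul, Ideal.mul_top, Ideal.ofList_ofFn_succ] at hhead
  · obtain ⟨j, hj⟩ := not_forall.1 hmax
    have hunit : IsUnit (f j) := notMem_maximalIdeal.1 hj
    rcases eq_or_ne j 0 with rfl | hj0
    · exact hunit.isSMulRegular _
    · have : Subsingleton (R ⧸ Ideal.span (f '' {j | j ≠ 0})) :=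
        Ideal.Quotient.subsingleton_iff.2
          (Ideal.eq_top_of_isUnit_mem _ (Ideal.subset_span ⟨j, hj0, rfl⟩) hunit)
      exact Function.injective_of_subsingleton _
end

section
/- Let (R, m) be a Noetherian local ring and let I ⊆ R be an m-primary ideal. Then there exist elements f_1, …, f_r generating I that form a filter-regular sequence. -/
open IsLocalRing

/-!
Choose the generators one at a time. Given `J < I`, the associated primes of `R ⧸ J` other
than `m` are finitely many and none of them contains the `m`-primary ideal `I`, so prime
avoidance yields `g ∈ I` outside `J` and outside all of them; `g` is then filter-regular
modulo `J`, and we pass to `J ⊔ (g)`. The strictly ascending chain of ideals ends at `I`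
because `R` is Noetherian.
-/

theorem Fin.cons_image_lt_succ {α : Type*} {r : ℕ} (g : α) (f : Fin r → α) (i : Fin r) :
    (Fin.cons g f : Fin (r + 1) → α) '' {j | j < i.succ} = insert g (f '' {j | j < i}) := by
  ext y
  simp [Fin.exists_fin_succ, eq_comm]

theorem Ideal.exists_mem_notMem_forall_notMem {R : Type*} [CommRing R] {I J : Ideal R}
    {S : Set (Ideal R)} (hS : S.Finite) (hprime : ∀ P ∈ S, P.IsPrime) (hIJ : ¬ I ≤ J)
    (hIS : ∀ P ∈ S, ¬ I ≤ P) : ∃ g ∈ I, g ∉ J ∧ ∀ P ∈ S, g ∉ P := by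
  classical
  have hnot : ¬ (I : Set R) ⊆ ⋃ P ∈ (↑(insert J hS.toFinset) : Set (Ideal R)), (P : Set R) := by
    rw [Ideal.subset_union_prime (f := fun P ↦ P) J J fun P hP hPJ _ ↦
      hprime P <| by simpa [hPJ] using hP]
    simpa using ⟨hIJ, hIS⟩
  obtain ⟨g, hgI, hg⟩ := Set.not_subset.mp hnot
  simp only [Finset.coe_insert, Set.Finite.coe_toFinset, Set.mem_iUnion, not_exists] at hg
  exact ⟨g, hgI, hg J (Set.mem_insert _ _), fun P hP ↦ hg P (Set.mem_insert_of_mem _ hP)⟩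

section LocalRing

variable {R : Type*} [CommRing R] [IsLocalRing R]

theorem Ideal.IsPrime.not_le_of_ne_maximalIdeal {I P : Ideal R} (hP : P.IsPrime)
    (hPm : P ≠ maximalIdeal R) (hI : ∃ n : ℕ, maximalIdeal R ^ n ≤ I) : ¬ I ≤ P := by
  rintro hIP
  obtain ⟨n, hn⟩ := hI
  exact hPm <| ((maximalIdeal.isMaximal R).eq_of_le hP.ne_top
    (hP.le_of_pow_le (hn.trans hIP))).symm

variable [IsNoetherianRing R]

theorem exists_mem_notMem_isFilterRegularOn {I J : Ideal R}
    (hI : ∃ n : ℕ, maximalIdeal R ^ n ≤ I) (hJI : J < I) :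
    ∃ g ∈ I, g ∉ J ∧ IsFilterRegularOn J g := by
  obtain ⟨g, hgI, hgJ, hg⟩ := Ideal.exists_mem_notMem_forall_notMem
    (S := {P ∈ associatedPrimes R (R ⧸ J) | P ≠ maximalIdeal R})
    ((associatedPrimes.finite R (R ⧸ J)).subset fun P hP ↦ hP.1)
    (fun P hP ↦ hP.1.isPrime) hJI.not_ge
    (fun P hP ↦ hP.1.isPrime.not_le_of_ne_maximalIdeal hP.2 hI)
  exact ⟨g, hgI, hgJ, fun P hP hPm ↦ hg P ⟨hP, hPm⟩⟩

theorem exists_isFilterRegularOn_sup_span_eq {I : Ideal R}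
    (hI : ∃ n : ℕ, maximalIdeal R ^ n ≤ I) (J : Ideal R) (hJI : J ≤ I) :
    ∃ (r : ℕ) (f : Fin r → R), J ⊔ Ideal.span (Set.range f) = I ∧
      ∀ i : Fin r, IsFilterRegularOn (J ⊔ Ideal.span (f '' {j | j < i})) (f i) := by
  induction J using IsNoetherian.induction with
  | hgt J ih =>
  rcases hJI.eq_or_lt with rfl | hJI
  · exact ⟨0, Fin.elim0, by simp, fun i ↦ i.elim0⟩
  obtain ⟨g, hgI, hgJ, hg⟩ := exists_mem_notMem_isFilterRegularOn hI hJI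
  have hJg : J < J ⊔ Ideal.span {g} :=
    left_lt_sup.mpr fun h ↦ hgJ (h (Ideal.mem_span_singleton_self g))
  obtain ⟨r, f, hspan, hf⟩ :=
    ih _ hJg (sup_le hJI.le ((Ideal.span_singleton_le_iff_mem I).mpr hgI))
  refine ⟨r + 1, Fin.cons g f, ?_, Fin.cases ?_ fun i ↦ ?_⟩
  · rwa [Fin.range_cons, Ideal.span_insert, ← sup_assoc]
  · simpa [Fin.not_lt_zero] using hg
  · rw [Fin.cons_succ, Fin.cons_image_lt_succ, Ideal.span_insert, ← sup_assoc]
    exact hf i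

end LocalRing

/-- Every `m`-primary ideal of a Noetherian local ring is generated by a filter-regular
sequence. -/
theorem exists_filter_regular_generators_of_primary
    {R : Type*} [CommRing R] [IsNoetherianRing R] [IsLocalRing R]
    (I : Ideal R) (hI : ∃ n : ℕ, maximalIdeal R ^ n ≤ I) :
    ∃ (r : ℕ) (f : Fin r → R), Ideal.span (Set.range f) = I ∧ IsFilterRegularSeq f := by
  obtain ⟨r, f, hspan, hf⟩ := exists_isFilterRegularOn_sup_span_eq hI ⊥ bot_le
  exact ⟨r, f, by simpa using hspan, fun i ↦ by simpa using hf i⟩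
end
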